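/- arXiv:2212.13288 — 2 statements merged into one kernel-verified Lean document; each statement's English description precedes it below -/
import Mathlib

section
/- Let y: [0,T] → [0,∞) be differentiable and satisfy y'(t) ≤ C₁ + α(t) y(t)^{1-r} for all t ∈ (0,T), where r ∈ (0,1), C₁ ≥ 0, and α is a nonnegative integrable function. Then there exists a constant C₂ > 0 (depending only on r) such that sup_{t∈(0,T)} y(t) ≤ C₂ [ y(0) + (C₁+1)T + (∫₀ᵀ α(t) dt)^{1/r} ]. -/
open Real Set

/-- Nonlinear Gronwall-type inequality: the constant `C₂` depends only on `r`. -/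
theorem nonlinear_gronwall (r : ℝ) (hr : r ∈ Set.Ioo (0:ℝ) 1) :
    ∃ C₂ > (0:ℝ), ∀ (T C₁ : ℝ) (y α : ℝ → ℝ),
      0 < T → 0 ≤ C₁ →
      (∀ t ∈ Set.Icc 0 T, 0 ≤ y t) →
      (∀ t ∈ Set.Icc 0 T, DifferentiableAt ℝ y t) →
      (∀ t ∈ Set.Icc 0 T, 0 ≤ α t) →
      MeasureTheory.IntegrableOn α (Set.Icc 0 T) →
      (∀ t ∈ Set.Ioo 0 T, deriv y t ≤ C₁ + α t * y t ^ (1 - r)) →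
      ∀ t ∈ Set.Ioo 0 T,
        y t ≤ C₂ * (y 0 + (C₁ + 1) * T + (∫ s in (0:ℝ)..T, α s) ^ (1 / r)) := by
  obtain ⟨hr0, hr1⟩ := hr
  refine ⟨2 + 2 ^ (1/r), by positivity, ?_⟩
  intro T C₁ y α hT hC₁ hy0 hdiff hα hαint hode t ht
  -- continuity of y on [0,T]
  have hcont : ContinuousOn y (Icc 0 T) := fun s hs =>
    (hdiff s hs).continuousAt.continuousWithinAt
  -- maximum point
  obtain ⟨t₀, ht₀, hmax⟩ := isCompact_Icc.exists_isMaxOn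
    (nonempty_Icc.2 hT.le) hcont
  set S := y t₀ with hS
  have hS0 : 0 ≤ S := hy0 t₀ ht₀
  have hytS : y t ≤ S := hmax ⟨ht.1.le, ht.2.le⟩
  set A := ∫ s in (0:ℝ)..T, α s with hA
  have hA0 : 0 ≤ A := intervalIntegral.integral_nonneg hT.le
    (fun s hs => hα s hs)
  -- nonnegativity of the bracket
  have hbr : 0 ≤ y 0 + (C₁ + 1) * T + A ^ (1/r) := by
    have h0 : (0:ℝ) ∈ Icc (0:ℝ) T := ⟨le_rfl, hT.le⟩
    have := hy0 0 h0
    positivity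
  -- key estimate : S ≤ y 0 + C₁ * T + A * S ^ (1 - r)
  have hkey : S ≤ y 0 + C₁ * T + A * S ^ (1 - r) := by
    have hφint : MeasureTheory.IntegrableOn
        (fun s => C₁ + α s * S ^ (1 - r)) (Icc 0 t₀) := by
      have : MeasureTheory.IntegrableOn α (Icc 0 t₀) :=
        hαint.mono_set (Icc_subset_Icc le_rfl ht₀.2)
      exact (MeasureTheory.integrableOn_const measure_Icc_lt_top.ne).add
        (this.mul_const _)
    have hder : ∀ s ∈ Ioo (0:ℝ) t₀, HasDerivWithinAt y (deriv y s) (Ioi s) s := by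
      intro s hs
      exact ((hdiff s ⟨hs.1.le, hs.2.le.trans ht₀.2⟩).hasDerivAt).hasDerivWithinAt
    have hle : ∀ s ∈ Ioo (0:ℝ) t₀, deriv y s ≤ C₁ + α s * S ^ (1 - r) := by
      intro s hs
      have hsmem : s ∈ Icc (0:ℝ) T := ⟨hs.1.le, hs.2.le.trans ht₀.2⟩
      have h1 := hode s ⟨hs.1, lt_of_lt_of_le hs.2 ht₀.2⟩
      have h2 : y s ^ (1 - r) ≤ S ^ (1 - r) :=
        Real.rpow_le_rpow (hy0 s hsmem) (hmax hsmem) (by linarith)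
      have h3 := hα s hsmem
      nlinarith
    have hmain := intervalIntegral.sub_le_integral_of_hasDeriv_right_of_le ht₀.1
      (hcont.mono (Icc_subset_Icc le_rfl ht₀.2)) hder hφint hle
    have hαint' : IntervalIntegrable α MeasureTheory.volume 0 t₀ :=
      (hαint.mono_set (by rw [uIcc_of_le ht₀.1]
                          exact Icc_subset_Icc le_rfl ht₀.2)).intervalIntegrable
    have hαintT : IntervalIntegrable α MeasureTheory.volume 0 T :=
      (hαint.mono_set (by rw [uIcc_of_le hT.le])).intervalIntegrable
    have hint_eq : (∫ s in (0:ℝ)..t₀, (C₁ + α s * S ^ (1 - r))) =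
        C₁ * t₀ + (∫ s in (0:ℝ)..t₀, α s) * S ^ (1 - r) := by
      rw [intervalIntegral.integral_add (intervalIntegrable_const) (hαint'.mul_const _),
        intervalIntegral.integral_const, intervalIntegral.integral_mul_const]
      simp [smul_eq_mul, mul_comm]
    have hmono : (∫ s in (0:ℝ)..t₀, α s) ≤ A := by
      apply intervalIntegral.integral_mono_interval le_rfl ht₀.1 ht₀.2 _ hαintT
      exact Filter.eventually_of_mem (MeasureTheory.self_mem_ae_restrict measurableSet_Ioc)
        (fun s hs => hα s ⟨hs.1.le, hs.2⟩)
    rw [hint_eq] at hmain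
    have hc : 0 ≤ S ^ (1 - r) := Real.rpow_nonneg hS0 _
    nlinarith [ht₀.1, ht₀.2]
  -- Young-type case split
  have hSbound : S ≤ (2 + 2 ^ (1/r)) * (y 0 + (C₁ + 1) * T + A ^ (1/r)) := by
    rcases le_or_gt (S ^ r) (2 * A) with hcase | hcase
    · -- S ≤ (2A)^{1/r}
      have h1 : S ≤ (2 * A) ^ (1/r) := by
        calc S = (S ^ r) ^ (1/r) := by
              rw [← Real.rpow_mul hS0, mul_one_div, div_self hr0.ne', Real.rpow_one]
          _ ≤ (2 * A) ^ (1/r) := Real.rpow_le_rpow (by positivity) hcase (by positivity)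
      have h2 : (2 * A) ^ (1/r) = 2 ^ (1/r) * A ^ (1/r) :=
        Real.mul_rpow (by norm_num) hA0
      calc S ≤ 2 ^ (1/r) * A ^ (1/r) := by rw [← h2]; exact h1
        _ ≤ (2 + 2 ^ (1/r)) * (y 0 + (C₁ + 1) * T + A ^ (1/r)) := by
            have h3 : A ^ (1/r) ≤ y 0 + (C₁ + 1) * T + A ^ (1/r) := by
              have := hy0 0 ⟨le_rfl, hT.le⟩; nlinarith
            have h4 : (0:ℝ) < 2 ^ (1/r) := by positivity
            nlinarith [Real.rpow_nonneg hA0 (1/r)]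
    · -- A ≤ S^r / 2 so A * S^{1-r} ≤ S/2
      rcases eq_or_lt_of_le hS0 with hS0' | hSpos
      · calc S = 0 := hS0'.symm
          _ ≤ _ := by positivity
      have hAS : A * S ^ (1 - r) ≤ S / 2 := by
        have : A * S ^ (1 - r) ≤ (S ^ r / 2) * S ^ (1 - r) := by
          have := Real.rpow_nonneg hS0 (1 - r)
          nlinarith
        calc A * S ^ (1 - r) ≤ (S ^ r / 2) * S ^ (1 - r) := this
          _ = S / 2 := by
            rw [div_mul_eq_mul_div, ← Real.rpow_add hSpos]
            norm_num
      have : S ≤ y 0 + C₁ * T + S / 2 := le_trans hkey (by linarith)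
      have h5 : S ≤ 2 * (y 0 + C₁ * T) := by linarith
      have h6 : (0:ℝ) ≤ 2 ^ (1/r) := by positivity
      have h7 : 0 ≤ A ^ (1/r) := Real.rpow_nonneg hA0 _
      have := hy0 0 ⟨le_rfl, hT.le⟩
      nlinarith
  exact hytS.trans hSbound
end

section
/- Let a, b > 0 and U∞, W∞, Z∞ > 0 with Z∞ = U∞W∞. Then there exists a constant c > 0 (depending on a, b, U∞, W∞, Z∞) such that for all x, y, z ≥ 0 satisfying a·x² + b·z² = a·U∞² + b·Z∞² and b·y² + b·z² = b·W∞² + b·Z∞², one has (z - x·y)² ≥ c·((x - U∞)² + (y - W∞)² + (z - Z∞)²). -/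
set_option maxHeartbeats 1000000 in
theorem reaction_defect_controls_distance (a b Uinf Winf Zinf : ℝ)
    (ha : 0 < a) (hb : 0 < b)
    (hU : 0 < Uinf) (hW : 0 < Winf) (hZ : 0 < Zinf)
    (hprod : Zinf = Uinf * Winf) :
    ∃ c > (0:ℝ), ∀ x y z : ℝ, 0 ≤ x → 0 ≤ y → 0 ≤ z →
      a * x ^ 2 + b * z ^ 2 = a * Uinf ^ 2 + b * Zinf ^ 2 →
      b * y ^ 2 + b * z ^ 2 = b * Winf ^ 2 + b * Zinf ^ 2 →
      (z - x * y) ^ 2 ≥ c * ((x - Uinf) ^ 2 + (y - Winf) ^ 2 + (z - Zinf) ^ 2) := by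
  set K : ℝ := b^2 * Winf^2 * (2*Zinf + Winf)^2 + a^2 * Uinf^2 * (2*Zinf + Winf)^2
      + a^2 * Uinf^2 * Winf^2 with hKdef
  have hKpos : 0 < K := by positivity
  refine ⟨a^2 * Uinf^2 * Winf^2 / K, by positivity, ?_⟩
  intro x y z hx hy hz h1 h2
  -- facts from the conservation laws
  have hyz : y^2 + z^2 = Winf^2 + Zinf^2 := by
    have h2' : b * (y^2 + z^2 - Winf^2 - Zinf^2) = 0 := by ring_nf; ring_nf at h2; linarith
    have := mul_eq_zero.mp h2'
    rcases this with h | h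
    · exact absurd h (ne_of_gt hb)
    · linarith
  have hax : a * (x^2 - Uinf^2) = b * (Zinf^2 - z^2) := by linarith
  have hzle : z ≤ Zinf + Winf := by nlinarith [sq_nonneg y, sq_nonneg (z - Zinf - Winf)]
  -- key inequality : (z - x*y)^2 ≥ (z - Zinf)^2
  have key : (z - Zinf)^2 ≤ (z - x*y)^2 := by
    rcases le_total Zinf z with h | h
    · have hz2 : Zinf^2 ≤ z^2 := pow_le_pow_left₀ hZ.le h 2
      have hx2 : x^2 ≤ Uinf^2 := by nlinarith [mul_nonneg hb.le (sub_nonneg.mpr hz2)]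
      have hy2 : y^2 ≤ Winf^2 := by linarith
      have hxU : x ≤ Uinf := by nlinarith
      have hyW : y ≤ Winf := by nlinarith
      have hxy : x * y ≤ Zinf := by rw [hprod]; exact mul_le_mul hxU hyW hy hU.le
      nlinarith
    · have hz2 : z^2 ≤ Zinf^2 := pow_le_pow_left₀ hz h 2
      have hx2 : Uinf^2 ≤ x^2 := by nlinarith [mul_nonneg hb.le (sub_nonneg.mpr hz2)]
      have hy2 : Winf^2 ≤ y^2 := by linarith
      have hxU : Uinf ≤ x := by nlinarith
      have hyW : Winf ≤ y := by nlinarith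
      have hxy : Zinf ≤ x * y := by rw [hprod]; exact mul_le_mul hxU hyW hW.le hx
      nlinarith
  -- (Zinf^2 - z^2)^2 ≤ (2Zinf+Winf)^2 (z-Zinf)^2
  have e3 : (Zinf^2 - z^2)^2 ≤ (2*Zinf + Winf)^2 * (z - Zinf)^2 := by
    have f1 : 0 ≤ Zinf + Winf - z := by linarith
    have f2 : 0 ≤ 3*Zinf + Winf + z := by linarith
    nlinarith [mul_nonneg (mul_nonneg f1 f2) (sq_nonneg (z - Zinf))]
  -- distance bounds
  have hb1 : a^2 * Uinf^2 * (x - Uinf)^2 ≤ b^2 * (2*Zinf + Winf)^2 * (z - Zinf)^2 := by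
    have g1 : 0 ≤ x^2 + 2*x*Uinf := by positivity
    have e1 : Uinf^2 * (x - Uinf)^2 ≤ (x^2 - Uinf^2)^2 := by
      nlinarith [mul_nonneg (sq_nonneg (x - Uinf)) g1]
    have e2 : a^2 * (x^2 - Uinf^2)^2 = b^2 * (Zinf^2 - z^2)^2 := by
      calc a^2 * (x^2 - Uinf^2)^2 = (a * (x^2 - Uinf^2))^2 := by ring
        _ = (b * (Zinf^2 - z^2))^2 := by rw [hax]
        _ = b^2 * (Zinf^2 - z^2)^2 := by ring
    have e1' : a^2 * (Uinf^2 * (x - Uinf)^2) ≤ a^2 * (x^2 - Uinf^2)^2 :=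
      mul_le_mul_of_nonneg_left e1 (sq_nonneg a)
    have e3' : b^2 * (Zinf^2 - z^2)^2 ≤ b^2 * ((2*Zinf + Winf)^2 * (z - Zinf)^2) :=
      mul_le_mul_of_nonneg_left e3 (sq_nonneg b)
    calc a^2 * Uinf^2 * (x - Uinf)^2 = a^2 * (Uinf^2 * (x - Uinf)^2) := by ring
      _ ≤ a^2 * (x^2 - Uinf^2)^2 := e1'
      _ = b^2 * (Zinf^2 - z^2)^2 := e2
      _ ≤ b^2 * ((2*Zinf + Winf)^2 * (z - Zinf)^2) := e3'
      _ = b^2 * (2*Zinf + Winf)^2 * (z - Zinf)^2 := by ring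
  have hb2 : Winf^2 * (y - Winf)^2 ≤ (2*Zinf + Winf)^2 * (z - Zinf)^2 := by
    have g1 : 0 ≤ y^2 + 2*y*Winf := by positivity
    have e1 : Winf^2 * (y - Winf)^2 ≤ (y^2 - Winf^2)^2 := by
      nlinarith [mul_nonneg (sq_nonneg (y - Winf)) g1]
    have e2 : (y^2 - Winf^2)^2 = (Zinf^2 - z^2)^2 := by
      have : y^2 - Winf^2 = Zinf^2 - z^2 := by linarith
      rw [this]
    calc Winf^2 * (y - Winf)^2 ≤ (y^2 - Winf^2)^2 := e1
      _ = (Zinf^2 - z^2)^2 := e2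
      _ ≤ (2*Zinf + Winf)^2 * (z - Zinf)^2 := e3
  -- combine
  have hsum : a^2 * Uinf^2 * Winf^2 * ((x - Uinf)^2 + (y - Winf)^2 + (z - Zinf)^2)
      ≤ K * (z - Zinf)^2 := by
    have p1 := mul_le_mul_of_nonneg_left hb1 (sq_nonneg Winf)
    have p2 := mul_le_mul_of_nonneg_left hb2 (mul_nonneg (sq_nonneg a) (sq_nonneg Uinf))
    rw [hKdef]; nlinarith [p1, p2]
  rw [ge_iff_le, div_mul_eq_mul_div, div_le_iff₀ hKpos]
  calc a^2 * Uinf^2 * Winf^2 * ((x - Uinf)^2 + (y - Winf)^2 + (z - Zinf)^2)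
      ≤ K * (z - Zinf)^2 := hsum
    _ ≤ K * (z - x*y)^2 := mul_le_mul_of_nonneg_left key hKpos.le
    _ = (z - x*y)^2 * K := by ring
end
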